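/- Let H : E → ℝ be smooth, β a closed smooth 1-form on E, f : E → ℝ smooth, and ζ a smooth vector field on E such that L_ζ(α_H + β) = df (ζ is a weak Noether symmetry). Then the function J(x) = (α_H + β)(x)(ζ(x)) − f(x) is a first integral of Hamilton's equations: dJ(x)(Z_H(x)) = 0 for all x ∈ E; equivalently, for every solution t ↦ (q(t), p(t)) of q̇ᵢ = ∂H/∂pᵢ, ṗᵢ = −∂H/∂qᵢ on an interval, the function t ↦ J(t, q(t), p(t)) is constant. -/

import Mathlib

/-!
Write `α = α_H + β`, so that `J = α(ζ) - f`. Cartan's formula `d(α(ζ)) = L_ζ α + dα(·, ζ)`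
together with `L_ζ α = df` gives `dJ = dα(·, ζ)`. Since `β` is closed, `dα = dα_H`, and the
Hamiltonian vector field lies in the kernel of the presymplectic form: `dα_H(Z_H, ·) = 0`
(this uses only `dH(Z_H) = ∂H/∂t`). Hence `dJ(Z_H) = 0`, and `J` is constant along the time graph
`t ↦ (t, q(t), p(t))` of any solution, whose velocity is `Z_H`.
-/

noncomputable section
open scoped ContDiff

/-- The extended phase space `E = ℝ × ℝⁿ × ℝⁿ`, with points `x = (t, q, p)`. -/
abbrev EE (n : ℕ) : Type := ℝ × (Fin n → ℝ) × (Fin n → ℝ)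

/-- The Poincaré–Cartan 1-form `α_H = p dq − H dt`:
`α_H(x)(τ̂, ξ̂, η̂) = ∑ i, pᵢ ξ̂ᵢ − H(x) τ̂`. -/
def pcForm {n : ℕ} (H : EE n → ℝ) (x : EE n) : EE n →L[ℝ] ℝ :=
  (∑ i, x.2.2 i • ((ContinuousLinearMap.proj i).comp
      ((ContinuousLinearMap.fst ℝ (Fin n → ℝ) (Fin n → ℝ)).comp
        (ContinuousLinearMap.snd ℝ ℝ ((Fin n → ℝ) × (Fin n → ℝ))))))
    - H x • ContinuousLinearMap.fst ℝ ℝ ((Fin n → ℝ) × (Fin n → ℝ))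

/-- The vector field `Z_H(x) = (1, ∂H/∂p(x), −∂H/∂q(x))` of Hamilton's equations. -/
def ZH {n : ℕ} (H : EE n → ℝ) (x : EE n) : EE n :=
  (1, fun i => fderiv ℝ H x (0, 0, Pi.single i 1),
      fun i => - fderiv ℝ H x (0, Pi.single i 1, 0))

/-- The Lie derivative of a 1-form `α` along a vector field `ζ`:
`(L_ζ α)(x)(v) = (Dα(x)(ζ(x)))(v) + α(x)(Dζ(x)(v))`. -/
def lieDeriv {n : ℕ} (ζ : EE n → EE n) (α : EE n → (EE n →L[ℝ] ℝ)) (x : EE n) :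
    EE n →L[ℝ] ℝ :=
  fderiv ℝ α x (ζ x) + (α x).comp (fderiv ℝ ζ x)

/-- The exterior derivative of a 1-form:
`dα(x)(u,v) = (Dα(x)u)(v) − (Dα(x)v)(u)`. -/
def extDeriv₁ {n : ℕ} (α : EE n → (EE n →L[ℝ] ℝ)) (x u v : EE n) : ℝ :=
  fderiv ℝ α x u v - fderiv ℝ α x v u

namespace WeakNoether

variable {n : ℕ}

def dt (n : ℕ) : EE n →L[ℝ] ℝ := ContinuousLinearMap.fst ℝ ℝ ((Fin n → ℝ) × (Fin n → ℝ))

def dq (i : Fin n) : EE n →L[ℝ] ℝ :=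
  (ContinuousLinearMap.proj i).comp
    ((ContinuousLinearMap.fst ℝ (Fin n → ℝ) (Fin n → ℝ)).comp
      (ContinuousLinearMap.snd ℝ ℝ ((Fin n → ℝ) × (Fin n → ℝ))))

def dp (i : Fin n) : EE n →L[ℝ] ℝ :=
  (ContinuousLinearMap.proj i).comp
    ((ContinuousLinearMap.snd ℝ (Fin n → ℝ) (Fin n → ℝ)).comp
      (ContinuousLinearMap.snd ℝ ℝ ((Fin n → ℝ) × (Fin n → ℝ))))

/-- The 1-form `p dq = ∑ i, pᵢ dqᵢ`, as a linear function of the base point. -/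
def pdq (n : ℕ) : EE n →L[ℝ] (EE n →L[ℝ] ℝ) := ∑ i, (dp i).smulRight (dq i)

lemma pdq_apply_apply (x v : EE n) : pdq n x v = ∑ i, x.2.2 i * v.2.1 i := by
  simp [pdq, dp, dq]

lemma pcForm_eq_pdq_sub (H : EE n → ℝ) (x : EE n) : pcForm H x = pdq n x - H x • dt n := by
  ext v <;> simp [pcForm, pdq, dp, dq, dt]

lemma clm_apply_eq_sum_coord (φ : EE n →L[ℝ] ℝ) (u : EE n) :
    φ u = φ (1, 0, 0) * u.1 + ∑ i, φ (0, Pi.single i 1, 0) * u.2.1 i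
      + ∑ i, φ (0, 0, Pi.single i 1) * u.2.2 i := by
  have hu : u = u.1 • ((1, 0, 0) : EE n) + ∑ i, u.2.1 i • ((0, Pi.single i 1, 0) : EE n)
      + ∑ i, u.2.2 i • ((0, 0, Pi.single i 1) : EE n) := by
    refine Prod.ext (by simp [Prod.fst_sum]) (Prod.ext ?_ ?_)
    · simpa [Prod.fst_sum, Prod.snd_sum] using pi_eq_sum_univ' u.2.1
    · simpa [Prod.fst_sum, Prod.snd_sum] using pi_eq_sum_univ' u.2.2
  conv_lhs => rw [hu]
  simp only [map_add, map_sum, map_smul, smul_eq_mul, mul_comm]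

lemma hasFDerivAt_pcForm {H : EE n → ℝ} {x : EE n} (hH : DifferentiableAt ℝ H x) :
    HasFDerivAt (pcForm H) (pdq n - (fderiv ℝ H x).smulRight (dt n)) x := by
  simp_rw [funext (pcForm_eq_pdq_sub H)]
  exact (pdq n).hasFDerivAt.sub (hH.hasFDerivAt.smul_const (dt n))

lemma extDeriv₁_pcForm {H : EE n → ℝ} {x : EE n} (hH : DifferentiableAt ℝ H x) (u v : EE n) :
    extDeriv₁ (pcForm H) x u v = ∑ i, u.2.2 i * v.2.1 i - ∑ i, u.2.1 i * v.2.2 i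
      - fderiv ℝ H x u * v.1 + fderiv ℝ H x v * u.1 := by
  simp only [extDeriv₁, (hasFDerivAt_pcForm hH).fderiv, sub_apply,
    ContinuousLinearMap.smulRight_apply, pdq_apply_apply]
  simp [dt, mul_comm (v.2.2 _)]
  ring

lemma fderiv_apply_ZH (H : EE n → ℝ) (x : EE n) :
    fderiv ℝ H x (ZH H x) = fderiv ℝ H x (1, 0, 0) := by
  rw [clm_apply_eq_sum_coord _ (ZH H x)]
  simp [ZH, mul_comm]

lemma extDeriv₁_pcForm_ZH {H : EE n → ℝ} {x : EE n} (hH : DifferentiableAt ℝ H x) (v : EE n) :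
    extDeriv₁ (pcForm H) x (ZH H x) v = 0 := by
  rw [extDeriv₁_pcForm hH, fderiv_apply_ZH, clm_apply_eq_sum_coord (fderiv ℝ H x) v]
  simp only [ZH, neg_mul, Finset.sum_neg_distrib, mul_one]
  ring

lemma extDeriv₁_add {α β : EE n → (EE n →L[ℝ] ℝ)} {x : EE n} (hα : DifferentiableAt ℝ α x)
    (hβ : DifferentiableAt ℝ β x) (u v : EE n) :
    extDeriv₁ (fun y => α y + β y) x u v = extDeriv₁ α x u v + extDeriv₁ β x u v := by
  rw [extDeriv₁, extDeriv₁, extDeriv₁, fderiv_fun_add hα hβ]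
  simp only [add_apply]
  ring

/-- Cartan's formula `d(ι_ζ α) = L_ζ α - ι_ζ dα`. -/
lemma fderiv_apply_eq_lieDeriv_add_extDeriv₁ {α : EE n → (EE n →L[ℝ] ℝ)} {ζ : EE n → EE n}
    {x : EE n} (hα : DifferentiableAt ℝ α x) (hζ : DifferentiableAt ℝ ζ x) (v : EE n) :
    fderiv ℝ (fun y => α y (ζ y)) x v = lieDeriv ζ α x v + extDeriv₁ α x v (ζ x) := by
  simp only [fderiv_clm_apply hα hζ, lieDeriv, extDeriv₁, add_apply,
    ContinuousLinearMap.comp_apply, ContinuousLinearMap.flip_apply]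
  ring

lemma fderiv_apply_sub_eq_extDeriv₁_of_lieDeriv_eq {α : EE n → (EE n →L[ℝ] ℝ)}
    {ζ : EE n → EE n} {f : EE n → ℝ} {x : EE n} (hα : DifferentiableAt ℝ α x)
    (hζ : DifferentiableAt ℝ ζ x) (hf : DifferentiableAt ℝ f x) (hsym : lieDeriv ζ α x = fderiv ℝ f x) (v : EE n) :
    fderiv ℝ (fun y => α y (ζ y) - f y) x v = extDeriv₁ α x v (ζ x) := by
  rw [fderiv_fun_sub (hα.clm_apply hζ) hf, sub_apply,
    fderiv_apply_eq_lieDeriv_add_extDeriv₁ hα hζ, hsym]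
  ring

lemma hasDerivAt_timeGraph {H : EE n → ℝ} {q p : ℝ → (Fin n → ℝ)} {t : ℝ}
    (hq : ∀ i, HasDerivAt (fun s => q s i) (fderiv ℝ H (t, q t, p t) (0, 0, Pi.single i 1)) t)
    (hp : ∀ i, HasDerivAt (fun s => p s i) (- fderiv ℝ H (t, q t, p t) (0, Pi.single i 1, 0)) t) :
    HasDerivAt (fun s => ((s, q s, p s) : EE n)) (ZH H (t, q t, p t)) t :=
  (hasDerivAt_id t).prodMk ((hasDerivAt_pi.2 hq).prodMk (hasDerivAt_pi.2 hp))

lemma eq_of_hamilton_of_fderiv_ZH_eq_zero {H J : EE n → ℝ} (hJ : Differentiable ℝ J)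
    (hJZ : ∀ x, fderiv ℝ J x (ZH H x) = 0) {a b : ℝ} {q p : ℝ → (Fin n → ℝ)}
    (hsol : ∀ t ∈ Set.Ioo a b,
      (∀ i, HasDerivAt (fun s => q s i) (fderiv ℝ H (t, q t, p t) (0, 0, Pi.single i 1)) t) ∧
      (∀ i, HasDerivAt (fun s => p s i) (- fderiv ℝ H (t, q t, p t) (0, Pi.single i 1, 0)) t))
    {t₁ t₂ : ℝ} (ht₁ : t₁ ∈ Set.Ioo a b) (ht₂ : t₂ ∈ Set.Ioo a b) :
    J (t₁, q t₁, p t₁) = J (t₂, q t₂, p t₂) := by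
  have hderiv : ∀ t ∈ Set.Ioo a b, HasDerivAt (fun s => J (s, q s, p s)) 0 t := fun t ht => by
    have h := (hJ _).hasFDerivAt.comp_hasDerivAt t
      (hasDerivAt_timeGraph (hsol t ht).1 (hsol t ht).2)
    rwa [hJZ] at h
  exact isOpen_Ioo.is_const_of_deriv_eq_zero isPreconnected_Ioo
    (fun t ht => (hderiv t ht).differentiableAt.differentiableWithinAt)
    (fun t ht => (hderiv t ht).deriv) ht₁ ht₂

end WeakNoether

open WeakNoether in
theorem weak_noether_first_integral {n : ℕ}
    (H f : EE n → ℝ) (β : EE n → (EE n →L[ℝ] ℝ)) (ζ : EE n → EE n)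
    (hH : ContDiff ℝ ∞ H) (hβ : ContDiff ℝ ∞ β) (hf : ContDiff ℝ ∞ f)
    (hζ : ContDiff ℝ ∞ ζ)
    (hβclosed : ∀ x u v, extDeriv₁ β x u v = 0)
    (hsym : ∀ x, lieDeriv ζ (fun y => pcForm H y + β y) x = fderiv ℝ f x)
    (J : EE n → ℝ) (hJ : ∀ x, J x = (pcForm H x + β x) (ζ x) - f x) :
    (∀ x, fderiv ℝ J x (ZH H x) = 0) ∧
    (∀ (a b : ℝ) (q p : ℝ → (Fin n → ℝ)),
      (∀ t ∈ Set.Ioo a b,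
        (∀ i, HasDerivAt (fun s => q s i)
          (fderiv ℝ H (t, q t, p t) (0, 0, Pi.single i 1)) t) ∧
        (∀ i, HasDerivAt (fun s => p s i)
          (- fderiv ℝ H (t, q t, p t) (0, Pi.single i 1, 0)) t)) →
      ∀ t₁ ∈ Set.Ioo a b, ∀ t₂ ∈ Set.Ioo a b,
        J (t₁, q t₁, p t₁) = J (t₂, q t₂, p t₂)) := by
  have hHd := hH.differentiable (by simp)
  have hβd := hβ.differentiable (by simp)
  have hfd := hf.differentiable (by simp)
  have hζd := hζ.differentiable (by simp)
  have hpcd : Differentiable ℝ (pcForm H) := fun x =>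
    (hasFDerivAt_pcForm (hHd x)).differentiableAt
  have hαd : Differentiable ℝ (fun y => pcForm H y + β y) := hpcd.add hβd
  have hJfun : J = fun y => (pcForm H y + β y) (ζ y) - f y := funext hJ
  have hJZ : ∀ x, fderiv ℝ J x (ZH H x) = 0 := fun x => by
    rw [hJfun, fderiv_apply_sub_eq_extDeriv₁_of_lieDeriv_eq (hαd x) (hζd x) (hfd x) (hsym x),
      extDeriv₁_add (hpcd x) (hβd x), extDeriv₁_pcForm_ZH (hHd x), hβclosed, add_zero]
  exact ⟨hJZ, fun a b q p hsol t₁ ht₁ t₂ ht₂ =>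
    eq_of_hamilton_of_fderiv_ZH_eq_zero (hJfun ▸ (hαd.clm_apply hζd).sub hfd) hJZ hsol ht₁ ht₂⟩
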